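/- arXiv:2410.08401 — 5 statements merged into one kernel-verified Lean document; each statement's English description precedes it below -/
import Mathlib

section
/- Let X, X′ ∈ M_{(n+1)×n}(F) and suppose X′ = k·X·k′ for some k ∈ Iw_{n+1} and k′ ∈ Iw_n. Then X satisfies the Minor Condition if and only if X′ satisfies the Minor Condition. -/
open Matrix

noncomputable section

/-- `v` is a surjective discrete (additive) valuation on the field `F` with uniformizer `ϖ`,
with the convention `v 0 = ⊤`. -/
def IsDVal {F : Type*} [Field F] (v : F → WithTop ℤ) (ϖ : F) : Prop :=
  (∀ x : F, v x = ⊤ ↔ x = 0) ∧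
  (∀ x y : F, v (x * y) = v x + v y) ∧
  (∀ x y : F, min (v x) (v y) ≤ v (x + y)) ∧
  (∀ k : ℤ, ∃ x : F, v x = (k : WithTop ℤ)) ∧
  v ϖ = (1 : WithTop ℤ)

/-- `tMat ϖ ν r` is the integer power `t_ν^r` of the matrix `t_ν = diag(ϖ^{ν-1}, …, ϖ, 1)`. -/
def tMat {F : Type*} [Field F] (ϖ : F) (ν : ℕ) (r : ℤ) : Matrix (Fin ν) (Fin ν) F :=
  Matrix.diagonal fun i => ϖ ^ (r * ((ν : ℤ) - 1 - ((i : ℕ) : ℤ)))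

/-- The antidiagonal permutation matrix `w_ν` ((1-based) entries `1` iff `i + j = ν + 1`). -/
def wMat (F : Type*) [Field F] (ν : ℕ) : Matrix (Fin ν) (Fin ν) F :=
  Matrix.of fun i j => if (i : ℕ) + (j : ℕ) + 1 = ν then 1 else 0

/-- `GL_ν(𝒪)`: integral matrices with an integral two-sided inverse. -/
def GLO {F : Type*} [Field F] (v : F → WithTop ℤ) (ν : ℕ) : Set (Matrix (Fin ν) (Fin ν) F) :=
  {g | (∀ i j, 0 ≤ v (g i j)) ∧
    ∃ g' : Matrix (Fin ν) (Fin ν) F, (∀ i j, 0 ≤ v (g' i j)) ∧ g * g' = 1 ∧ g' * g = 1}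

/-- `N°_ν`: integral upper-triangular unipotent matrices. -/
def NO {F : Type*} [Field F] (v : F → WithTop ℤ) (ν : ℕ) : Set (Matrix (Fin ν) (Fin ν) F) :=
  {g | (∀ i j, 0 ≤ v (g i j)) ∧ (∀ i, g i i = 1) ∧ ∀ i j : Fin ν, j < i → g i j = 0}

/-- `N_ν(F)`: all upper-triangular unipotent matrices. -/
def Nfull (F : Type*) [Field F] (ν : ℕ) : Set (Matrix (Fin ν) (Fin ν) F) :=
  {g | (∀ i, g i i = 1) ∧ ∀ i j : Fin ν, j < i → g i j = 0}

/-- The standard Iwahori subgroup `Iw_ν`. -/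
def Iw {F : Type*} [Field F] (v : F → WithTop ℤ) (ν : ℕ) : Set (Matrix (Fin ν) (Fin ν) F) :=
  {g | g ∈ GLO v ν ∧ ∀ i j : Fin ν, j < i → (1 : WithTop ℤ) ≤ v (g i j)}

/-- `K_ν^{(r)} = GL_ν(𝒪) ∩ t_ν^{-r}·GL_ν(𝒪)·t_ν^{r}` (for any `r : ℤ`). -/
def Kpar {F : Type*} [Field F] (v : F → WithTop ℤ) (ϖ : F) (ν : ℕ) (r : ℤ) :
    Set (Matrix (Fin ν) (Fin ν) F) :=
  {g | g ∈ GLO v ν ∧ tMat ϖ ν r * g * tMat ϖ ν (-r) ∈ GLO v ν}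

/-- `K_ν^{⟨r⟩}`. -/
def KparAng {F : Type*} [Field F] (v : F → WithTop ℤ) (ϖ : F) (ν : ℕ) (r : ℤ) :
    Set (Matrix (Fin ν) (Fin ν) F) :=
  {g | g ∈ Kpar v ϖ ν r ∧ ∀ i, ((|r| - 1 : ℤ) : WithTop ℤ) ≤ v (g i i - 1)}

/-- `K_ν^{[r]}`. -/
def KparSq {F : Type*} [Field F] (v : F → WithTop ℤ) (ϖ : F) (ν : ℕ) (r : ℤ) :
    Set (Matrix (Fin ν) (Fin ν) F) :=
  {g | g ∈ Kpar v ϖ ν r ∧ ∀ i, ((|r| : ℤ) : WithTop ℤ) ≤ v (g i i - 1)}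

/-- A subset of a monoid is a subgroup. -/
def IsSubgrp {M : Type*} [Monoid M] (S : Set M) : Prop :=
  (1 : M) ∈ S ∧ (∀ a ∈ S, ∀ b ∈ S, a * b ∈ S) ∧ ∀ a ∈ S, ∃ b ∈ S, a * b = 1 ∧ b * a = 1

/-- A standard deeper Iwahori subgroup: a subgroup `K ⊆ Iw_ν` with `K ∩ N_ν(F) = N°_ν`. -/
def IsStdDeeperIwahori {F : Type*} [Field F] (v : F → WithTop ℤ) (ν : ℕ)
    (K : Set (Matrix (Fin ν) (Fin ν) F)) : Prop :=
  IsSubgrp K ∧ K ⊆ Iw v ν ∧ K ∩ Nfull F ν = NO v ν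

/-- The all-ones column vector of length `n`. -/
def uCol (F : Type*) [Field F] (n : ℕ) : Matrix (Fin n) (Fin 1) F :=
  Matrix.of fun _ _ => 1

/-- The twisting matrix `m = [[w_n, u],[0,1]]`. -/
def mMat (F : Type*) [Field F] (n : ℕ) : Matrix (Fin (n + 1)) (Fin (n + 1)) F :=
  Matrix.reindex finSumFinEquiv finSumFinEquiv
    (Matrix.fromBlocks (wMat F n) (uCol F n) 0 (1 : Matrix (Fin 1) (Fin 1) F))

/-- Block-diagonal embedding `h ↦ diag(h, 1)`. -/
def dg1 {F : Type*} [Field F] {n : ℕ} (h : Matrix (Fin n) (Fin n) F) :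
    Matrix (Fin (n + 1)) (Fin (n + 1)) F :=
  Matrix.reindex finSumFinEquiv finSumFinEquiv
    (Matrix.fromBlocks h 0 0 (1 : Matrix (Fin 1) (Fin 1) F))

/-- The subgroup `K_H^{(r)} ⊆ GL_n(𝒪)`. -/
def KH {F : Type*} [Field F] (v : F → WithTop ℤ) (ϖ : F) (n : ℕ) (r : ℤ) :
    Set (Matrix (Fin n) (Fin n) F) :=
  {h | h ∈ GLO v n ∧ (∀ i j, 0 ≤ v ((tMat ϖ n (-r) * h * tMat ϖ n r) i j)) ∧
    (mMat F n)⁻¹ * dg1 h * mMat F n ∈ Kpar v ϖ (n + 1) (-r)}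

/-- The double-coset set `K₁ · X₀ · K₂`. -/
def KXK {F : Type*} [Field F] {p q : ℕ} (K1 : Set (Matrix (Fin p) (Fin p) F))
    (X0 : Matrix (Fin p) (Fin q) F) (K2 : Set (Matrix (Fin q) (Fin q) F)) :
    Set (Matrix (Fin p) (Fin q) F) :=
  {X | ∃ k ∈ K1, ∃ k' ∈ K2, X = k * X0 * k'}

/-- The antidiagonal rectangular matrix `X°` with `X°_{n+2-i, i} = ϖ^{λ_i}` (1-based indices)
and all other entries `0`. -/
def Xanti {F : Type*} [Field F] (ϖ : F) (n : ℕ) (lam : Fin n → ℤ) :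
    Matrix (Fin (n + 1)) (Fin n) F :=
  Matrix.of fun r j => if (r : ℕ) + (j : ℕ) = n then ϖ ^ (lam j) else 0

/-- `diag(ϖ^{λ_1}, …, ϖ^{λ_ν}) · w_ν`. -/
def Xdw {F : Type*} [Field F] (ϖ : F) (ν : ℕ) (lam : Fin ν → ℤ) : Matrix (Fin ν) (Fin ν) F :=
  Matrix.diagonal (fun i => ϖ ^ (lam i)) * wMat F ν

/-- The rectangular matrix `e_{n+1,n}` with upper `n×n` block the identity and zero last row. -/
def ePad (F : Type*) [Field F] (n : ℕ) : Matrix (Fin (n + 1)) (Fin n) F :=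
  Matrix.of fun i j => if (i : ℕ) = (j : ℕ) then 1 else 0

/-- `λ_1 + ⋯ + λ_r`. -/
def minorSum {n : ℕ} (lam : Fin n → ℤ) (r : ℕ) (hrn : r ≤ n) : ℤ :=
  ∑ i : Fin r, lam (Fin.castLE hrn i)

/-- Row indices of the Southwest-principal `r×r` minor: the last `r` rows. -/
def swRow (n r : ℕ) (hrn : r ≤ n) (i : Fin r) : Fin (n + 1) :=
  ⟨n + 1 - r + (i : ℕ), by have := i.isLt; omega⟩

/-- The Minor Condition (relative to fixed integers `λ_1 < ⋯ < λ_n`). -/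
def MinorCond {F : Type*} [Field F] (v : F → WithTop ℤ) {n : ℕ} (lam : Fin n → ℤ)
    (X : Matrix (Fin (n + 1)) (Fin n) F) : Prop :=
  ∀ r : ℕ, 1 ≤ r → ∀ hrn : r ≤ n,
    (∀ (f : Fin r → Fin (n + 1)) (g : Fin r → Fin n), StrictMono f → StrictMono g →
      ((minorSum lam r hrn : ℤ) : WithTop ℤ) ≤ v ((X.submatrix f g).det)) ∧
    v ((X.submatrix (swRow n r hrn) (Fin.castLE hrn)).det) = ((minorSum lam r hrn : ℤ) : WithTop ℤ)

/-- The Weak Minor Condition: Minor Condition restricted to anchored minors. -/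
def WeakMinorCond {F : Type*} [Field F] (v : F → WithTop ℤ) {n : ℕ} (lam : Fin n → ℤ)
    (X : Matrix (Fin (n + 1)) (Fin n) F) : Prop :=
  ∀ r : ℕ, 1 ≤ r → ∀ hrn : r ≤ n,
    (∀ (f : Fin r → Fin (n + 1)) (g : Fin r → Fin n), StrictMono f → StrictMono g →
      Fin.last n ∈ Set.range f →
      ((minorSum lam r hrn : ℤ) : WithTop ℤ) ≤ v ((X.submatrix f g).det)) ∧
    v ((X.submatrix (swRow n r hrn) (Fin.castLE hrn)).det) = ((minorSum lam r hrn : ℤ) : WithTop ℤ)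

/-- Condition `Z(i)`: `X_{n+2-i', j} = 0` for all `1 ≤ i' ≤ i` and `i' < j ≤ n` (1-based). -/
def CondZ {F : Type*} [Field F] {n : ℕ} (X : Matrix (Fin (n + 1)) (Fin n) F) (i : ℕ) : Prop :=
  ∀ i' j : ℕ, (h1 : 1 ≤ i') → (h2 : i' ≤ i) → (h3 : i' < j) → (h4 : j ≤ n) →
    X ⟨n + 1 - i', by omega⟩ ⟨j - 1, by omega⟩ = 0

/-- Condition `Z'(j)`: `X_{n+2-i, j'} = 0` for all `j + 1 ≤ j' < i ≤ n + 1` (1-based). -/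
def CondZpr {F : Type*} [Field F] {n : ℕ} (X : Matrix (Fin (n + 1)) (Fin n) F) (j : ℕ) : Prop :=
  ∀ j' i : ℕ, (h1 : j + 1 ≤ j') → (h2 : j' < i) → (h3 : i ≤ n + 1) →
    X ⟨n + 1 - i, by omega⟩ ⟨j' - 1, by omega⟩ = 0

/-- `h` is `s`-small. -/
def SSmall {F : Type*} [Field F] (v : F → WithTop ℤ) {n : ℕ} (s : ℤ)
    (h : Matrix (Fin n) (Fin n) F) : Prop :=
  (∀ i, v (h i i) = 0) ∧
  ∀ i j : Fin n, ((|((j : ℕ) : ℤ) - ((i : ℕ) : ℤ)| * s : ℤ) : WithTop ℤ) ≤ v (h i j)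

/-- Block form `[[α, 0], [*, *]]` with `α` of size `i × i` lower triangular with diagonal
entries of valuation `0`. -/
def BlockLowUpTo {F : Type*} [Field F] (v : F → WithTop ℤ) {n : ℕ} (i : ℕ)
    (h : Matrix (Fin n) (Fin n) F) : Prop :=
  (∀ a : Fin n, (a : ℕ) < i → v (h a a) = 0) ∧
  ∀ a b : Fin n, (a : ℕ) < i → (a : ℕ) < (b : ℕ) → h a b = 0

/-- `h` is upper-`s`-small up to row `i`. -/
def UpperSmallUpTo {F : Type*} [Field F] (v : F → WithTop ℤ) {n : ℕ} (s : ℤ) (i : ℕ)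
    (h : Matrix (Fin n) (Fin n) F) : Prop :=
  ∃ hm hp : Matrix (Fin n) (Fin n) F, BlockLowUpTo v i hm ∧ SSmall v s hp ∧ h = hm * hp

/-- `h` is extremely `s`-small. -/
def ExtrSmall {F : Type*} [Field F] (v : F → WithTop ℤ) {n : ℕ} (s : ℤ)
    (h : Matrix (Fin n) (Fin n) F) : Prop :=
  SSmall v s h ∧ Matrix.mulVec (wMat F n * h - 1) (fun _ => (1 : F)) = 0

/-- `h` is lower triangular with diagonal entries of valuation `0`. -/
def LowerUnitTri {F : Type*} [Field F] (v : F → WithTop ℤ) {n : ℕ}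
    (h : Matrix (Fin n) (Fin n) F) : Prop :=
  (∀ a : Fin n, v (h a a) = 0) ∧ ∀ a b : Fin n, a < b → h a b = 0

/-- `h` is lower-`s`-small from column `j` (1-based `j`). -/
def LowerSmallFrom {F : Type*} [Field F] (v : F → WithTop ℤ) {n : ℕ} (s : ℤ) (j : ℕ)
    (h : Matrix (Fin n) (Fin n) F) : Prop :=
  ∀ a b : Fin n, j ≤ (b : ℕ) + 1 → (b : ℕ) < (a : ℕ) →
    (((((a : ℕ) : ℤ) - ((b : ℕ) : ℤ)) * s : ℤ) : WithTop ℤ) ≤ v (h a b)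

/-- Block form `[[α₋, 0], [*, 1]]` with `α₋` of size `(j-1) × (j-1)` lower triangular with
diagonal entries of valuation `0`, and lower-right identity block (1-based `j`). -/
def BlockLowFrom {F : Type*} [Field F] (v : F → WithTop ℤ) {n : ℕ} (j : ℕ)
    (h : Matrix (Fin n) (Fin n) F) : Prop :=
  (∀ a : Fin n, (a : ℕ) < j - 1 → v (h a a) = 0) ∧
  (∀ a b : Fin n, (a : ℕ) < j - 1 → (a : ℕ) < (b : ℕ) → h a b = 0) ∧
  ∀ a b : Fin n, j - 1 ≤ (a : ℕ) → j - 1 ≤ (b : ℕ) → h a b = if a = b then 1 else 0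

/-- The action `X ._s h := diag(t_n^{-s} h^{-w} t_n^{s}, 1) · X · (t_n^{-s} h t_n^{s})`. -/
def actS {F : Type*} [Field F] (ϖ : F) {n : ℕ} (s : ℤ) (X : Matrix (Fin (n + 1)) (Fin n) F)
    (h : Matrix (Fin n) (Fin n) F) : Matrix (Fin (n + 1)) (Fin n) F :=
  dg1 (tMat ϖ n (-s) * (wMat F n * h⁻¹ * (wMat F n)⁻¹) * tMat ϖ n s) * X *
    (tMat ϖ n (-s) * h * tMat ϖ n s)

/-- The residue field `𝒪/(ϖ)` has cardinality `q`. -/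
def ResidueCard {F : Type*} [Field F] (v : F → WithTop ℤ) (q : ℕ) : Prop :=
  ∃ R : Finset F, R.card = q ∧ (∀ x ∈ R, 0 ≤ v x) ∧
    ∀ x : F, 0 ≤ v x → ∃! y, y ∈ R ∧ (1 : WithTop ℤ) ≤ v (x - y)

/-- `H` has index `k` in `G`: there is a transversal of cardinality `k`. -/
def IndexEq {M : Type*} [Monoid M] (H G : Set M) (k : ℕ) : Prop :=
  ∃ T : Finset M, T.card = k ∧ ↑T ⊆ G ∧ ∀ g ∈ G, ∃! t, t ∈ T ∧ ∃ h ∈ H, g = h * t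

def cExp (ν : ℕ) : ℕ := (ν - 1) * ν * (ν + 1) / 6

def dExp (n : ℕ) : ℕ := n * (n + 1) * (2 * n + 1) / 6

/-- The block matrix `B = [[1_n, u],[0,1]]`. -/
def BMat (F : Type*) [Field F] (n : ℕ) : Matrix (Fin (n + 1)) (Fin (n + 1)) F :=
  Matrix.reindex finSumFinEquiv finSumFinEquiv
    (Matrix.fromBlocks (1 : Matrix (Fin n) (Fin n) F) (uCol F n) 0 (1 : Matrix (Fin 1) (Fin 1) F))

/-- The group `G = GL_n(F) × GL_{n+1}(F)` (as a matrix pair monoid). -/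
abbrev GPair (F : Type*) [Field F] (n : ℕ) :=
  Matrix (Fin n) (Fin n) F × Matrix (Fin (n + 1)) (Fin (n + 1)) F

def tPair {F : Type*} [Field F] (ϖ : F) (n : ℕ) : GPair F n :=
  (tMat ϖ n 1, tMat ϖ (n + 1) 1)

def tPairInv {F : Type*} [Field F] (ϖ : F) (n : ℕ) : GPair F n :=
  (tMat ϖ n (-1), tMat ϖ (n + 1) (-1))

/-- `m_s = (t_n^s, m·t_{n+1}^s)`. -/
def mPair {F : Type*} [Field F] (ϖ : F) (n : ℕ) (s : ℤ) : GPair F n :=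
  (tMat ϖ n s, mMat F n * tMat ϖ (n + 1) s)

/-- `ι(h) = (h, diag(h,1))`. -/
def iotaPair {F : Type*} [Field F] {n : ℕ} (h : Matrix (Fin n) (Fin n) F) : GPair F n :=
  (h, dg1 h)

def NOPair {F : Type*} [Field F] (v : F → WithTop ℤ) (n : ℕ) : Set (GPair F n) :=
  {p | p.1 ∈ NO v n ∧ p.2 ∈ NO v (n + 1)}

def KAngPair {F : Type*} [Field F] (v : F → WithTop ℤ) (ϖ : F) (n : ℕ) (r : ℤ) :
    Set (GPair F n) :=
  {p | p.1 ∈ KparAng v ϖ n r ∧ p.2 ∈ KparAng v ϖ (n + 1) r}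

/-- The left coset `g · K`. -/
def lCoset {M : Type*} [Mul M] (g : M) (K : Set M) : Set M := (g * ·) '' K

/-!
Every `r × r` minor of `k * X` (resp. `X * k'`) is a combination of `r × r` minors of `X` whose
coefficients are products of entries of `k` (resp. `k'`). Integrality of these coefficients
transports the lower bounds on all minors from `X` to `k * X * k'`, and back, since `k⁻¹` and
`k'⁻¹` are integral too. For the Southwest-principal minor the coefficient of the corresponding
minor of `X` is a product of diagonal entries, hence a unit, while every other coefficient of a
nonzero term contains a strictly subdiagonal entry of an Iwahori matrix and so has positive
valuation. So the Southwest-principal minor of `k * X * k'` has valuation exactly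
`λ_1 + ⋯ + λ_r` iff that of `X` does.
-/

open Finset Function

namespace AddValuation

variable {R Γ₀ : Type*} [CommRing R] [LinearOrderedAddCommMonoidWithTop Γ₀] (w : AddValuation R Γ₀)

theorem map_prod {ι : Type*} (s : Finset ι) (f : ι → R) :
    w (∏ i ∈ s, f i) = ∑ i ∈ s, w (f i) := by
  classical
  induction s using Finset.cons_induction with
  | empty => simp [w.map_one]
  | cons a s _ ih => rw [prod_cons, sum_cons, w.map_mul, ih]

theorem map_prod_nonneg {ι : Type*} {s : Finset ι} {f : ι → R} (hf : ∀ i ∈ s, 0 ≤ w (f i)) :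
    0 ≤ w (∏ i ∈ s, f i) :=
  w.map_prod s f ▸ sum_nonneg hf

theorem map_le_map_prod {ι : Type*} {s : Finset ι} {f : ι → R} (hf : ∀ i ∈ s, 0 ≤ w (f i))
    {i : ι} (hi : i ∈ s) : w (f i) ≤ w (∏ i ∈ s, f i) :=
  w.map_prod s f ▸ single_le_sum hf hi

theorem map_intCast_units_mul (u : ℤˣ) (x : R) : w (((u : ℤ) : R) * x) = w x := by
  rcases Int.units_eq_one_or u with rfl | rfl <;> simp [w.map_neg]

theorem map_sum_eq_iff_of_lt {ι : Type*} [DecidableEq ι] {s : Finset ι} {f : ι → R} {j : ι}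
    (hj : j ∈ s) {g : Γ₀} (hg : g ≠ ⊤) (hfj : g ≤ w (f j))
    (hf : ∀ i ∈ s, i ≠ j → g < w (f i)) : w (∑ i ∈ s, f i) = g ↔ w (f j) = g := by
  rw [← add_sum_erase s f hj]
  have hrest : g < w (∑ i ∈ s.erase j, f i) :=
    w.map_lt_sum hg fun i hi => hf i (mem_of_mem_erase hi) (ne_of_mem_erase hi)
  rcases hfj.eq_or_lt with h | h
  · rw [w.map_add_eq_of_lt_left (h ▸ hrest), h]
  · exact iff_of_false (w.map_lt_add h hrest).ne' h.ne'

end AddValuation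

theorem IsDVal.exists_addValuation {F : Type*} [Field F] {v : F → WithTop ℤ} {ϖ : F}
    (hv : IsDVal v ϖ) : ∃ w : AddValuation F (WithTop ℤ), ⇑w = v := by
  have h1 : v 1 = 0 := by
    have h := hv.2.1 1 1
    rw [one_mul] at h
    lift v 1 to ℤ using fun h' => one_ne_zero ((hv.1 1).1 h') with a
    norm_cast at h ⊢
    omega
  exact ⟨AddValuation.of v ((hv.1 0).2 rfl) h1 hv.2.2.1 hv.2.1, rfl⟩

theorem val_eq_of_injective_of_le {r : ℕ} {a : Fin r → ℕ} (ha : Injective a)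
    (hle : ∀ j, a j ≤ j) (j : Fin r) : a j = j := by
  obtain ⟨j, hj⟩ := j
  induction j using Nat.strong_induction_on with
  | _ j ih =>
    refine le_antisymm (hle _) (not_lt.1 fun hlt => ?_)
    have hfix := ih _ hlt (hlt.trans hj)
    exact hlt.ne (congrArg Fin.val (ha hfix))

theorem Equiv.Perm.exists_lt_apply_of_ne_one {m : ℕ} {σ : Equiv.Perm (Fin m)} (hσ : σ ≠ 1) :
    ∃ i, i < σ i := by
  by_contra! h
  exact hσ <| Equiv.ext fun i => Fin.ext <|
    val_eq_of_injective_of_le (a := fun i => (σ i : ℕ)) (fun i j hij => σ.injective (Fin.ext hij))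
      (fun i => h i) i

theorem exists_lt_apply_of_ne_castLE {r q : ℕ} (hrq : r ≤ q) {ψ : Fin r → Fin q}
    (hψ : Injective ψ) (hne : ψ ≠ Fin.castLE hrq) : ∃ j : Fin r, (j : ℕ) < ψ j := by
  by_contra! h
  exact hne <| funext fun j => Fin.ext <|
    val_eq_of_injective_of_le (a := fun j => (ψ j : ℕ)) (fun i j hij => hψ (Fin.ext hij)) h j

theorem exists_apply_lt_swRow_of_ne {n r : ℕ} (hrn : r ≤ n) {φ : Fin r → Fin (n + 1)}
    (hφ : Injective φ) (hne : φ ≠ swRow n r hrn) : ∃ i, φ i < swRow n r hrn i := by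
  by_contra! h
  have hge : ∀ i : Fin r, n + 1 - r + i ≤ φ i := h
  have hrefl := val_eq_of_injective_of_le (a := fun j => n - (φ (Fin.rev j) : ℕ))
    (fun i j hij => by
      have := (φ (Fin.rev i)).isLt; have := (φ (Fin.rev j)).isLt
      exact Fin.rev_injective (hφ (Fin.ext (by simp only at hij; omega))))
    (fun j => by have := hge (Fin.rev j); simp only [Fin.val_rev] at this ⊢; omega)
  refine hne (funext fun i => Fin.ext ?_)
  have hi := hrefl (Fin.rev i)
  have := (φ i).isLt; have := i.isLt
  simp only [Fin.rev_rev, Fin.val_rev] at hi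
  simp only [swRow]
  omega

namespace Matrix

variable {R : Type*} [CommRing R]

theorem det_mul_eq_sum_prod_mul_det_submatrix {ι m : Type*} [Fintype ι] [DecidableEq ι]
    [Fintype m] [DecidableEq m] (B : Matrix ι m R) (C : Matrix m ι R) :
    (B * C).det = ∑ φ : ι → m, (∏ i, B i (φ i)) * (C.submatrix φ id).det := by
  have hrows : (B * C).det = detRowAlternating (fun i => ∑ k, B i k • C k) := by
    show detRowAlternating (B * C) = _
    congr 1
    funext i j
    simp [Matrix.mul_apply]
  have hsum := (detRowAlternating (R := R) (n := ι)).toMultilinearMap.map_sum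
    (g := fun i k => B i k • C k)
  simp only [AlternatingMap.coe_multilinearMap] at hsum
  rw [hrows, hsum]
  refine sum_congr rfl fun φ _ => ?_
  have hsmul := (detRowAlternating (R := R) (n := ι)).toMultilinearMap.map_smul_univ
    (fun i => B i (φ i)) (fun i => C (φ i))
  simp only [AlternatingMap.coe_multilinearMap] at hsmul ⊢
  rw [hsmul, smul_eq_mul]
  rfl

theorem det_submatrix_eq_zero_of_not_injective_left {ι m n : Type*} [Fintype ι] [DecidableEq ι]
    (X : Matrix m n R) {f : ι → m} (hf : ¬Injective f) (g : ι → n) :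
    (X.submatrix f g).det = 0 := by
  obtain ⟨a, b, hab, hne⟩ := not_injective_iff.1 hf
  exact det_zero_of_row_eq hne (funext fun j => by simp [hab])

theorem det_submatrix_eq_zero_of_not_injective_right {ι m n : Type*} [Fintype ι] [DecidableEq ι]
    (X : Matrix m n R) (f : ι → m) {g : ι → n} (hg : ¬Injective g) :
    (X.submatrix f g).det = 0 := by
  obtain ⟨a, b, hab, hne⟩ := not_injective_iff.1 hg
  exact det_zero_of_column_eq hne (fun i => by simp [hab])

theorem det_submatrix_mul_left {ι l m n : Type*} [Fintype ι] [DecidableEq ι]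
    [Fintype m] [DecidableEq m] (A : Matrix l m R) (X : Matrix m n R) (f : ι → l) (g : ι → n) :
    ((A * X).submatrix f g).det = ∑ φ : ι → m, (∏ i, A (f i) (φ i)) * (X.submatrix φ g).det := by
  rw [submatrix_mul A X f id g bijective_id, det_mul_eq_sum_prod_mul_det_submatrix]
  rfl

theorem det_submatrix_mul_right {ι l m n : Type*} [Fintype ι] [DecidableEq ι]
    [Fintype m] [DecidableEq m] (X : Matrix l m R) (B : Matrix m n R) (f : ι → l) (g : ι → n) :
    ((X * B).submatrix f g).det = ∑ ψ : ι → m, (∏ j, B (ψ j) (g j)) * (X.submatrix f ψ).det := by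
  rw [← det_transpose, transpose_submatrix, transpose_mul, det_submatrix_mul_left]
  simp_rw [← det_transpose (X.submatrix f _), transpose_submatrix]
  rfl

end Matrix

section

variable {F : Type*} [Field F] (w : AddValuation F (WithTop ℤ))

theorem val_det_nonneg {m : Type*} [Fintype m] [DecidableEq m] {M : Matrix m m F}
    (hM : ∀ i j, 0 ≤ w (M i j)) : 0 ≤ w M.det := by
  rw [det_apply']
  exact w.map_le_sum fun σ _ => (w.map_intCast_units_mul _ _).symm ▸
    w.map_prod_nonneg fun i _ => hM _ _

theorem val_det_eq_zero_of_mem_GLO {m : ℕ} {k : Matrix (Fin m) (Fin m) F} (hk : k ∈ GLO w m) :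
    w k.det = 0 := by
  obtain ⟨hint, k', hk'int, hmul, -⟩ := hk
  have hsum : w k.det + w k'.det = 0 := by
    rw [← w.map_mul, ← det_mul, hmul, det_one, w.map_one]
  have h₁ := val_det_nonneg w hint
  have h₂ := val_det_nonneg w hk'int
  lift w k.det to ℤ using fun h => by simp [h] at hsum with a
  lift w k'.det to ℤ using fun h => by simp [h] at hsum with b
  norm_cast at hsum h₁ h₂ ⊢
  omega

-- Modulo `ϖ` the determinant of an Iwahori matrix is the product of its diagonal entries.
theorem val_diag_eq_zero_of_mem_Iw {m : ℕ} {k : Matrix (Fin m) (Fin m) F} (hk : k ∈ Iw w m)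
    (i : Fin m) : w (k i i) = 0 := by
  classical
  have hint := hk.1.1
  have hprod : w (∏ i, k i i) = 0 := by
    have hdet := val_det_eq_zero_of_mem_GLO w hk.1
    rw [det_apply'] at hdet
    refine (w.map_intCast_units_mul _ _).symm.trans <| (w.map_sum_eq_iff_of_lt (mem_univ 1)
      WithTop.zero_ne_top ?_ fun σ _ hσ => ?_).1 hdet
    · rw [w.map_intCast_units_mul]
      exact w.map_prod_nonneg fun i _ => hint i i
    · obtain ⟨i₀, hi₀⟩ := σ.exists_lt_apply_of_ne_one hσ
      rw [w.map_intCast_units_mul]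
      exact zero_lt_one.trans_le <|
        (hk.2 _ _ hi₀).trans (w.map_le_map_prod (fun i _ => hint _ _) (mem_univ i₀))
  exact le_antisymm (hprod ▸ w.map_le_map_prod (fun i _ => hint i i) (mem_univ i)) (hint i i)

theorem val_prod_diag_mul_of_mem_Iw {m r : ℕ} {k : Matrix (Fin m) (Fin m) F} (hk : k ∈ Iw w m)
    (f : Fin r → Fin m) (x : F) : w ((∏ i, k (f i) (f i)) * x) = w x := by
  rw [w.map_mul, w.map_prod, sum_eq_zero fun i _ => val_diag_eq_zero_of_mem_Iw w hk (f i),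
    zero_add]

def MinorsGE {p q : Type*} (v : F → WithTop ℤ) (X : Matrix p q F) (r : ℕ) (Λ : WithTop ℤ) :
    Prop :=
  ∀ (f : Fin r → p) (g : Fin r → q), Λ ≤ v (X.submatrix f g).det

theorem minorsGE_iff_strictMono {m n r : ℕ} {X : Matrix (Fin m) (Fin n) F} {Λ : WithTop ℤ} :
    MinorsGE w X r Λ ↔ ∀ (f : Fin r → Fin m) (g : Fin r → Fin n), StrictMono f → StrictMono g →
      Λ ≤ w (X.submatrix f g).det := by
  refine ⟨fun h f g _ _ => h f g, fun h φ ψ => ?_⟩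
  by_cases hφ : Injective φ
  swap
  · simp [det_submatrix_eq_zero_of_not_injective_left X hφ ψ]
  by_cases hψ : Injective ψ
  swap
  · simp [det_submatrix_eq_zero_of_not_injective_right X φ hψ]
  set σ := Tuple.sort φ
  set τ := Tuple.sort ψ
  have hsort : X.submatrix φ ψ =
      ((X.submatrix (φ ∘ σ) (ψ ∘ τ)).submatrix σ.symm id).submatrix id τ.symm := by
    ext i j
    simp
  rw [hsort, det_permute', det_permute, w.map_intCast_units_mul, w.map_intCast_units_mul]
  exact h _ _ ((Tuple.monotone_sort φ).strictMono_of_injective (hφ.comp σ.injective))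
    ((Tuple.monotone_sort ψ).strictMono_of_injective (hψ.comp τ.injective))

theorem MinorsGE.mul_left {l m n : Type*} [Fintype m] [DecidableEq m] {A : Matrix l m F}
    (hA : ∀ i j, 0 ≤ w (A i j)) {X : Matrix m n F} {r : ℕ} {Λ : WithTop ℤ}
    (hX : MinorsGE w X r Λ) : MinorsGE w (A * X) r Λ := fun f g => by
  rw [det_submatrix_mul_left]
  refine w.map_le_sum fun φ _ => ?_
  rw [w.map_mul]
  simpa using add_le_add (w.map_prod_nonneg fun i _ => hA _ _) (hX φ g)

theorem MinorsGE.mul_right {l m n : Type*} [Fintype m] [DecidableEq m] {X : Matrix l m F}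
    {r : ℕ} {Λ : WithTop ℤ} (hX : MinorsGE w X r Λ) {B : Matrix m n F}
    (hB : ∀ i j, 0 ≤ w (B i j)) : MinorsGE w (X * B) r Λ := fun f g => by
  rw [det_submatrix_mul_right]
  refine w.map_le_sum fun ψ _ => ?_
  rw [w.map_mul]
  simpa using add_le_add (w.map_prod_nonneg fun i _ => hB _ _) (hX f ψ)

theorem coe_lt_val_mul {a b : F} {Λ : ℤ} (ha : 1 ≤ w a) (hb : (Λ : WithTop ℤ) ≤ w b) :
    (Λ : WithTop ℤ) < w (a * b) := by
  rw [w.map_mul]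
  calc (Λ : WithTop ℤ) < 1 + (Λ : WithTop ℤ) := by exact_mod_cast (by omega : Λ < 1 + Λ)
    _ ≤ w a + w b := add_le_add ha hb

theorem val_det_submatrix_swRow_mul_left_eq_iff {n q r : ℕ} (hrn : r ≤ n)
    {k : Matrix (Fin (n + 1)) (Fin (n + 1)) F} (hk : k ∈ Iw w (n + 1))
    {X : Matrix (Fin (n + 1)) (Fin q) F} {Λ : ℤ} (hX : MinorsGE w X r Λ) (g : Fin r → Fin q) :
    w ((k * X).submatrix (swRow n r hrn) g).det = Λ ↔
      w (X.submatrix (swRow n r hrn) g).det = Λ := by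
  classical
  rw [det_submatrix_mul_left, w.map_sum_eq_iff_of_lt (mem_univ (swRow n r hrn))
    WithTop.coe_ne_top ?_ fun φ _ hne => ?_, val_prod_diag_mul_of_mem_Iw w hk]
  · exact (val_prod_diag_mul_of_mem_Iw w hk _ _).symm ▸ hX _ g
  by_cases hφ : Injective φ
  swap
  · simp [det_submatrix_eq_zero_of_not_injective_left X hφ g]
  obtain ⟨i₀, hi₀⟩ := exists_apply_lt_swRow_of_ne hrn hφ hne
  exact coe_lt_val_mul w ((hk.2 _ _ hi₀).trans
    (w.map_le_map_prod (fun i _ => hk.1.1 _ _) (mem_univ i₀))) (hX φ g)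

theorem val_det_submatrix_castLE_mul_right_eq_iff {p q r : ℕ} (hrq : r ≤ q)
    {X : Matrix (Fin p) (Fin q) F} {Λ : ℤ} (hX : MinorsGE w X r Λ)
    {k : Matrix (Fin q) (Fin q) F} (hk : k ∈ Iw w q) (f : Fin r → Fin p) :
    w ((X * k).submatrix f (Fin.castLE hrq)).det = Λ ↔
      w (X.submatrix f (Fin.castLE hrq)).det = Λ := by
  classical
  rw [det_submatrix_mul_right, w.map_sum_eq_iff_of_lt (mem_univ (Fin.castLE hrq))
    WithTop.coe_ne_top ?_ fun ψ _ hne => ?_, val_prod_diag_mul_of_mem_Iw w hk]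
  · exact (val_prod_diag_mul_of_mem_Iw w hk _ _).symm ▸ hX f _
  by_cases hψ : Injective ψ
  swap
  · simp [det_submatrix_eq_zero_of_not_injective_right X f hψ]
  obtain ⟨j₀, hj₀⟩ := exists_lt_apply_of_ne_castLE hrq hψ hne
  exact coe_lt_val_mul w ((hk.2 _ _ hj₀).trans
    (w.map_le_map_prod (fun j _ => hk.1.1 _ _) (mem_univ j₀))) (hX f ψ)

end

theorem statement4_general {F : Type*} [Field F] (v : F → WithTop ℤ) (ϖ : F) (hval : IsDVal v ϖ)
    (n : ℕ) (lam : Fin n → ℤ)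
    (X X' : Matrix (Fin (n + 1)) (Fin n) F)
    (k : Matrix (Fin (n + 1)) (Fin (n + 1)) F) (hk : k ∈ Iw v (n + 1))
    (k' : Matrix (Fin n) (Fin n) F) (hk' : k' ∈ Iw v n)
    (hX' : X' = k * X * k') :
    MinorCond v lam X ↔ MinorCond v lam X' := by
  obtain ⟨w, rfl⟩ := hval.exists_addValuation
  obtain ⟨hkint, kinv, hkinvint, -, hkinv⟩ := hk.1
  obtain ⟨hk'int, k'inv, hk'invint, hk'inv, -⟩ := hk'.1
  have hX : X = kinv * X' * k'inv := by
    rw [hX', ← Matrix.mul_assoc, Matrix.mul_assoc _ k', hk'inv, Matrix.mul_one,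
      ← Matrix.mul_assoc, hkinv, Matrix.one_mul]
  have hminors : ∀ r Λ, MinorsGE w X r Λ ↔ MinorsGE w X' r Λ := fun r Λ =>
    ⟨fun h => hX' ▸ (h.mul_left w hkint).mul_right w hk'int,
      fun h => hX ▸ (h.mul_left w hkinvint).mul_right w hk'invint⟩
  subst hX'
  refine forall_congr' fun r => forall_congr' fun _ => forall_congr' fun hrn => ?_
  simp only [← minorsGE_iff_strictMono]
  have hsw : MinorsGE w X r (minorSum lam r hrn) →
      (w ((k * X * k').submatrix (swRow n r hrn) (Fin.castLE hrn)).det = minorSum lam r hrn ↔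
        w (X.submatrix (swRow n r hrn) (Fin.castLE hrn)).det = minorSum lam r hrn) := fun h =>
    (val_det_submatrix_castLE_mul_right_eq_iff w hrn (h.mul_left w hkint) hk' _).trans
      (val_det_submatrix_swRow_mul_left_eq_iff w hrn hk h _)
  exact (and_congr_right hsw).symm.trans (and_congr_left' (hminors r _))

/-- Lemma 6.2 (1): the Minor Condition is invariant under `Iw_{n+1} × Iw_n`. -/
theorem statement4 {F : Type*} [Field F] (v : F → WithTop ℤ) (ϖ : F) (hval : IsDVal v ϖ)
    (n : ℕ) (hn : 1 ≤ n) (lam : Fin n → ℤ) (hlam : StrictMono lam)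
    (X X' : Matrix (Fin (n + 1)) (Fin n) F)
    (k : Matrix (Fin (n + 1)) (Fin (n + 1)) F) (hk : k ∈ Iw v (n + 1))
    (k' : Matrix (Fin n) (Fin n) F) (hk' : k' ∈ Iw v n)
    (hX' : X' = k * X * k') :
    MinorCond v lam X ↔ MinorCond v lam X' :=
  statement4_general v ϖ hval n lam X X' k hk k' hk' hX'
end
end

section
/- Let r ≥ 1 be an integer and h ∈ GL_n(F). The following are equivalent: (i) h ∈ GL_n(𝒪), all entries of t_n^{−r}·h·t_n^{r} lie in 𝒪, and m^{−1}·diag(h,1)·m ∈ K_{n+1}^{(−r)}; (ii) h ∈ GL_n(𝒪), all entries of t_n^{−r}·h·t_n^{r} lie in 𝒪, and m^{−1}·diag(h,1)·m ∈ K_{n+1}^{[−r]}; (iii) v(h_{ij}) ≥ r·|i−j| for all 1 ≤ i, j ≤ n, and the i-th row sum Σ_{j=1}^{n} h_{ij} lies in 1 + ϖ^{i·r}𝒪 for all 1 ≤ i ≤ n. In particular, K_H^{(r)} = {h ∈ GL_n(F) : v(h_{ij}) ≥ r·|i−j| for all i, j, and Σ_{j=1}^{n} h_{ij} ∈ 1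 + ϖ^{i·r}𝒪 for all i}. -/
open Matrix

noncomputable section

/-- The explicit description of `K_H^{(r)}` from Remark 5.8 / equation (5.5). -/
def KHexplicit {F : Type*} [Field F] (v : F → WithTop ℤ) (ϖ : F) (n : ℕ) (r : ℤ) :
    Set (Matrix (Fin n) (Fin n) F) :=
  {h | (∀ a b : Fin n, ((r * |((a : ℕ) : ℤ) - ((b : ℕ) : ℤ)| : ℤ) : WithTop ℤ) ≤ v (h a b)) ∧
    ∀ a : Fin n, (((((a : ℕ) : ℤ) + 1) * r : ℤ) : WithTop ℤ) ≤ v ((∑ b, h a b) - 1)}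

/-!
Conjugation by `m` turns `diag(h, 1)` into the block matrix `[[w h w, w h u - u], [0, 1]]`,
whose last column holds the row sums of `h` minus one, in reversed order. Integrality of
`t^{-r} X t^{r}` means `v(X_ij) ≥ r (j - i)`: for `h` this gives the bounds above the diagonal,
for the block matrix (where `w` reverses the indices) those below it and the row-sum bounds.
Conversely, the explicit conditions make each diagonal entry of `h` a row sum minus
off-diagonal terms, so `h ≡ 1 mod ϖ^r` and `det h` is a unit. The block matrix then satisfies
the same band bounds `v(X_ij) ≥ r |i - j|` and has the same determinant, and band bounds
together with a unit determinant give membership in `K^{(-r)}`.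
-/

lemma Fin.intCast_val_rev {n : ℕ} (a : Fin n) : ((a.rev : ℕ) : ℤ) = n - 1 - a := by
  have := a.isLt
  rw [Fin.val_rev]
  omega

lemma WithTop.zero_le_coe_add_iff (k : ℤ) (t : WithTop ℤ) :
    0 ≤ (k : WithTop ℤ) + t ↔ ((-k : ℤ) : WithTop ℤ) ≤ t := by
  cases t with
  | top => simp
  | coe t => norm_cast; omega

namespace AddValuation

variable {R Γ₀ : Type*} [CommRing R] [LinearOrderedAddCommMonoidWithTop Γ₀] (V : AddValuation R Γ₀)

lemma map_units_int_smul (u : ℤˣ) (x : R) : V (u • x) = V x := by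
  rcases Int.units_eq_one_or u with rfl | rfl <;> simp [Units.smul_def]

lemma zero_le_of_le_map_sub_one {c : Γ₀} {x : R} (hc : 0 ≤ c) (hx : c ≤ V (x - 1)) :
    0 ≤ V x := by
  simpa using V.map_le_add (hc.trans hx) V.map_one.ge

lemma zero_le_map_prod {ι : Type*} {s : Finset ι} {f : ι → R} (hf : ∀ i ∈ s, 0 ≤ V (f i)) :
    0 ≤ V (∏ i ∈ s, f i) :=
  Finset.prod_induction f (fun x => 0 ≤ V x)
    (fun x y hx hy => (V.map_mul x y).symm ▸ add_nonneg hx hy) V.map_one.ge hf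

lemma le_map_prod_sub_one {ι : Type*} {s : Finset ι} {f : ι → R} {c : Γ₀} (hc : 0 ≤ c)
    (hf : ∀ i ∈ s, c ≤ V (f i - 1)) : c ≤ V (∏ i ∈ s, f i - 1) := by
  classical
  induction s using Finset.induction with
  | empty => simp
  | insert a s ha ih =>
    have hfa := hf a (Finset.mem_insert_self a s)
    rw [Finset.prod_insert ha,
      show f a * ∏ i ∈ s, f i - 1 = f a * (∏ i ∈ s, f i - 1) + (f a - 1) by ring]
    refine V.map_le_add ?_ hfa
    rw [V.map_mul, ← zero_add c]
    exact add_le_add (V.zero_le_of_le_map_sub_one hc hfa)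
      (ih fun i hi => hf i (Finset.mem_insert_of_mem hi))

variable {ι : Type*} [Fintype ι] [DecidableEq ι]

lemma zero_le_map_det {X : Matrix ι ι R} (hX : ∀ i j, 0 ≤ V (X i j)) : 0 ≤ V X.det := by
  rw [Matrix.det_apply]
  exact V.map_le_sum fun σ _ =>
    (V.map_units_int_smul _ _).symm ▸ V.zero_le_map_prod fun i _ => hX _ _

/-- Off the identity permutation, every Leibniz term of `det X` contains an off-diagonal entry. -/
lemma le_map_det_sub_one {X : Matrix ι ι R} {c : Γ₀} (hc : 0 ≤ c)
    (hX : ∀ i j, c ≤ V ((X - 1) i j)) : c ≤ V (X.det - 1) := by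
  have hint : ∀ i j, 0 ≤ V (X i j) := fun i j => by
    have h1 : 0 ≤ V ((1 : Matrix ι ι R) i j) := by
      rw [Matrix.one_apply]; split_ifs <;> simp
    simpa using V.map_le_add (hc.trans (hX i j)) h1
  rw [Matrix.det_apply, ← Finset.add_sum_erase _ _ (Finset.mem_univ 1), add_sub_right_comm]
  refine V.map_le_add ?_ (V.map_le_sum fun σ hσ => ?_)
  · simpa using V.le_map_prod_sub_one hc fun i _ => by simpa using hX i i
  · obtain ⟨a, ha⟩ : ∃ a, σ a ≠ a :=
      not_forall.mp fun h => (Finset.mem_erase.mp hσ).1 (Equiv.ext h)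
    rw [V.map_units_int_smul, ← Finset.mul_prod_erase _ _ (Finset.mem_univ a), V.map_mul,
      ← add_zero c]
    exact add_le_add (by simpa [Matrix.one_apply_ne ha] using hX (σ a) a)
      (V.zero_le_map_prod fun i _ => hint _ _)

lemma map_det_eq_zero {X : Matrix ι ι R} {c : Γ₀} (hc : 0 < c)
    (hX : ∀ i j, c ≤ V ((X - 1) i j)) : V X.det = 0 := by
  have hlt : V 1 < V (X.det - 1) := V.map_one ▸ hc.trans_le (V.le_map_det_sub_one hc.le hX)
  simpa using V.map_add_eq_of_lt_left hlt

end AddValuation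

namespace IsDVal

variable {F : Type*} [Field F] {v : F → WithTop ℤ} {ϖ : F} (hv : IsDVal v ϖ)
include hv

lemma map_zero : v 0 = ⊤ := (hv.1 0).2 rfl

lemma map_one : v 1 = 0 := by
  obtain ⟨a, ha⟩ := WithTop.ne_top_iff_exists.mp (mt (hv.1 1).mp one_ne_zero)
  have h := hv.2.1 1 1
  rw [mul_one, ← ha] at h
  have : a = a + a := by exact_mod_cast h
  rw [← ha, show a = 0 by omega, WithTop.coe_zero]

def toAddValuation : AddValuation F (WithTop ℤ) :=
  AddValuation.of v hv.map_zero hv.map_one hv.2.2.1 hv.2.1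

@[simp]
lemma toAddValuation_apply (x : F) : hv.toAddValuation x = v x := rfl

lemma uniformizer_ne_zero : ϖ ≠ 0 := by
  rintro rfl
  simpa [hv.map_zero] using hv.2.2.2.2

lemma map_zpow_uniformizer (k : ℤ) : v (ϖ ^ k) = k := by
  have hϖ : hv.toAddValuation ϖ = 1 := hv.2.2.2.2
  rw [← hv.toAddValuation_apply]
  rcases k with m | m
  · rw [Int.ofNat_eq_natCast, zpow_natCast, AddValuation.map_pow, hϖ, nsmul_one]; rfl
  · rw [zpow_negSucc, AddValuation.map_inv, AddValuation.map_pow, hϖ, nsmul_one,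
      Int.negSucc_eq]
    norm_cast

lemma mem_GLO {ν : ℕ} {X : Matrix (Fin ν) (Fin ν) F} (hX : ∀ i j, 0 ≤ v (X i j))
    (hdet : v X.det = 0) : X ∈ GLO v ν := by
  have hdet0 : X.det ≠ 0 := fun h => by simp [h, hv.map_zero] at hdet
  have hadj : ∀ i j, 0 ≤ v (X.adjugate i j) := fun i j => by
    rw [Matrix.adjugate_apply]
    refine hv.toAddValuation.zero_le_map_det fun k l => ?_
    rw [Matrix.updateRow_apply]
    split_ifs
    · rw [Pi.single_apply]; split_ifs <;> simp
    · exact hX k l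
  refine ⟨hX, X.det⁻¹ • X.adjugate, fun i j => ?_, ?_, ?_⟩
  · have hinv : v X.det⁻¹ = 0 := by
      rw [← hv.toAddValuation_apply, AddValuation.map_inv, hv.toAddValuation_apply, hdet,
        neg_zero]
    rw [Matrix.smul_apply, smul_eq_mul, hv.2.1, hinv, zero_add]
    exact hadj i j
  · rw [Matrix.mul_smul, Matrix.mul_adjugate, smul_smul, inv_mul_cancel₀ hdet0, one_smul]
  · rw [Matrix.smul_mul, Matrix.adjugate_mul, smul_smul, inv_mul_cancel₀ hdet0, one_smul]

end IsDVal

section Matrices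

variable {F : Type*} [Field F]

lemma tMat_mul_mul_tMat_apply (ϖ : F) {ν : ℕ} (s s' : ℤ) (X : Matrix (Fin ν) (Fin ν) F)
    (i j : Fin ν) :
    (tMat ϖ ν s * X * tMat ϖ ν s') i j
      = ϖ ^ (s * ((ν : ℤ) - 1 - (i : ℕ))) * X i j * ϖ ^ (s' * ((ν : ℤ) - 1 - (j : ℕ))) := by
  simp only [tMat, Matrix.mul_diagonal, Matrix.diagonal_mul]

lemma det_tMat_neg_mul_mul_tMat {ϖ : F} (hϖ : ϖ ≠ 0) {ν : ℕ} (r : ℤ)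
    (X : Matrix (Fin ν) (Fin ν) F) : (tMat ϖ ν (-r) * X * tMat ϖ ν r).det = X.det := by
  rw [Matrix.det_mul, Matrix.det_mul, mul_right_comm, ← Matrix.det_mul]
  simp [tMat, inv_mul_cancel₀ (zpow_ne_zero _ hϖ)]

variable {n : ℕ}

lemma wMat_apply (a b : Fin n) : wMat F n a b = if b = a.rev then 1 else 0 := by
  simp only [wMat, Matrix.of_apply, Fin.ext_iff, Fin.val_rev]
  congr 1
  exact propext (by omega)

lemma wMat_apply' (a b : Fin n) : wMat F n a b = if a = b.rev then 1 else 0 := by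
  rw [wMat_apply]
  exact if_congr (eq_comm.trans Fin.rev_eq_iff) rfl rfl

lemma wMat_mul_apply {m : Type*} (A : Matrix (Fin n) m F) (a : Fin n) (b : m) :
    (wMat F n * A) a b = A a.rev b := by
  simp [Matrix.mul_apply, wMat_apply]

lemma mul_wMat_apply {m : Type*} (A : Matrix m (Fin n) F) (a : m) (b : Fin n) :
    (A * wMat F n) a b = A a b.rev := by
  simp [Matrix.mul_apply, wMat_apply']

lemma wMat_mul_wMat : wMat F n * wMat F n = 1 := by
  ext a b
  simp [wMat_mul_apply, wMat_apply, Matrix.one_apply, eq_comm]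

lemma wMat_mul_uCol : wMat F n * uCol F n = uCol F n := by
  ext a b
  rw [wMat_mul_apply]
  rfl

lemma inv_mMat : (mMat F n)⁻¹ = Matrix.reindex finSumFinEquiv finSumFinEquiv
    (Matrix.fromBlocks (wMat F n) (-uCol F n) 0 (1 : Matrix (Fin 1) (Fin 1) F)) := by
  refine Matrix.inv_eq_left_inv ?_
  simp only [mMat, Matrix.reindex_apply, Matrix.submatrix_mul_equiv, Matrix.fromBlocks_multiply]
  simp [wMat_mul_wMat, wMat_mul_uCol]

lemma inv_mMat_mul_dg1_mul_mMat (h : Matrix (Fin n) (Fin n) F) :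
    (mMat F n)⁻¹ * dg1 h * mMat F n = Matrix.reindex finSumFinEquiv finSumFinEquiv
      (Matrix.fromBlocks (wMat F n * h * wMat F n) (wMat F n * h * uCol F n - uCol F n) 0
        (1 : Matrix (Fin 1) (Fin 1) F)) := by
  rw [inv_mMat]
  simp only [mMat, dg1, Matrix.reindex_apply, Matrix.submatrix_mul_equiv,
    Matrix.fromBlocks_multiply]
  congr 2 <;> simp [Matrix.mul_assoc, sub_eq_add_neg]

variable (h : Matrix (Fin n) (Fin n) F)

-- `mConj` in a name stands for `(mMat F n)⁻¹ * dg1 h * mMat F n`.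
lemma mConj_castSucc_castSucc (a b : Fin n) :
    ((mMat F n)⁻¹ * dg1 h * mMat F n) a.castSucc b.castSucc = h a.rev b.rev := by
  simp [inv_mMat_mul_dg1_mul_mMat, wMat_mul_apply, mul_wMat_apply]

lemma mConj_castSucc_last (a : Fin n) :
    ((mMat F n)⁻¹ * dg1 h * mMat F n) a.castSucc (Fin.last n) = ∑ b, h a.rev b - 1 := by
  rw [inv_mMat_mul_dg1_mul_mMat]
  simp [Matrix.mul_apply, wMat_apply, uCol]

lemma mConj_last_castSucc (b : Fin n) :
    ((mMat F n)⁻¹ * dg1 h * mMat F n) (Fin.last n) b.castSucc = 0 := by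
  simp [inv_mMat_mul_dg1_mul_mMat]

lemma mConj_last_last :
    ((mMat F n)⁻¹ * dg1 h * mMat F n) (Fin.last n) (Fin.last n) = 1 := by
  simp [inv_mMat_mul_dg1_mul_mMat]

lemma det_mConj : ((mMat F n)⁻¹ * dg1 h * mMat F n).det = h.det := by
  rw [inv_mMat_mul_dg1_mul_mMat, Matrix.det_reindex_self, Matrix.det_fromBlocks_zero₂₁,
    Matrix.det_one, mul_one, Matrix.det_mul, Matrix.det_mul, mul_right_comm, ← Matrix.det_mul,
    wMat_mul_wMat, Matrix.det_one, one_mul]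

end Matrices

section Banded

variable {F : Type*} {v : F → WithTop ℤ} {ϖ : F}

def IsBanded (v : F → WithTop ℤ) (r : ℤ) {ν : ℕ} (X : Matrix (Fin ν) (Fin ν) F) : Prop :=
  ∀ i j : Fin ν, ((r * |((i : ℕ) : ℤ) - ((j : ℕ) : ℤ)| : ℤ) : WithTop ℤ) ≤ v (X i j)

lemma IsBanded.zero_le {r : ℤ} {ν : ℕ} {X : Matrix (Fin ν) (Fin ν) F} (hX : IsBanded v r X)
    (hr : 0 ≤ r) (i j : Fin ν) : 0 ≤ v (X i j) :=
  le_trans (WithTop.coe_le_coe.mpr (mul_nonneg hr (abs_nonneg _))) (hX i j)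

variable [Field F]

lemma IsDVal.zero_le_map_tMat_conj_apply_iff (hv : IsDVal v ϖ) {ν : ℕ} (r : ℤ)
    (X : Matrix (Fin ν) (Fin ν) F) (i j : Fin ν) :
    0 ≤ v ((tMat ϖ ν (-r) * X * tMat ϖ ν r) i j) ↔
      ((r * (((j : ℕ) : ℤ) - ((i : ℕ) : ℤ)) : ℤ) : WithTop ℤ) ≤ v (X i j) := by
  rw [tMat_mul_mul_tMat_apply, hv.2.1, hv.2.1, hv.map_zpow_uniformizer, hv.map_zpow_uniformizer,
    add_right_comm, ← WithTop.coe_add, WithTop.zero_le_coe_add_iff]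
  ring_nf

namespace IsBanded

variable {r : ℤ} {ν : ℕ} {X : Matrix (Fin ν) (Fin ν) F}

lemma zero_le_conj (hX : IsBanded v r X) (hv : IsDVal v ϖ) (hr : 0 ≤ r) (i j : Fin ν) :
    0 ≤ v ((tMat ϖ ν (-r) * X * tMat ϖ ν r) i j) := by
  refine (hv.zero_le_map_tMat_conj_apply_iff r X i j).2 (le_trans ?_ (hX i j))
  rw [abs_sub_comm]
  exact WithTop.coe_le_coe.mpr (mul_le_mul_of_nonneg_left (le_abs_self _) hr)

lemma mem_Kpar (hX : IsBanded v r X) (hv : IsDVal v ϖ) (hr : 0 ≤ r) (hdet : v X.det = 0) :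
    X ∈ Kpar v ϖ ν (-r) := by
  refine ⟨hv.mem_GLO (hX.zero_le hr) hdet, ?_⟩
  rw [neg_neg]
  refine hv.mem_GLO (hX.zero_le_conj hv hr) ?_
  rwa [det_tMat_neg_mul_mul_tMat hv.uniformizer_ne_zero]

end IsBanded

end Banded

section KH

variable {F : Type*} [Field F] {v : F → WithTop ℤ} {ϖ : F} {n : ℕ} {r : ℤ}
  {h : Matrix (Fin n) (Fin n) F}

lemma le_map_of_mem_KHexplicit (hr : 0 ≤ r) (hh : h ∈ KHexplicit v ϖ n r) {a b : Fin n}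
    (hab : a ≠ b) : (r : WithTop ℤ) ≤ v (h a b) := by
  refine le_trans (WithTop.coe_le_coe.mpr ?_) (hh.1 a b)
  have : (1 : ℤ) ≤ |((a : ℕ) : ℤ) - ((b : ℕ) : ℤ)| :=
    Int.one_le_abs (sub_ne_zero.mpr (by exact_mod_cast Fin.val_ne_of_ne hab))
  nlinarith

lemma le_map_sub_one_of_mem_KHexplicit (hv : IsDVal v ϖ) (hr : 0 ≤ r)
    (hh : h ∈ KHexplicit v ϖ n r) (a b : Fin n) : (r : WithTop ℤ) ≤ v ((h - 1) a b) := by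
  rcases eq_or_ne a b with rfl | hab
  · have hdiag : (h - 1) a a = (∑ b, h a b - 1) - ∑ b ∈ Finset.univ.erase a, h a b := by
      rw [← Finset.add_sum_erase _ _ (Finset.mem_univ a)]
      simp
    rw [hdiag, ← hv.toAddValuation_apply]
    refine hv.toAddValuation.map_le_sub (le_trans (WithTop.coe_le_coe.mpr ?_) (hh.2 a))
      (hv.toAddValuation.map_le_sum fun b hb =>
        le_map_of_mem_KHexplicit hr hh (Finset.mem_erase.mp hb).1.symm)
    nlinarith [(Int.natCast_nonneg (a : ℕ))]
  · simpa [Matrix.one_apply_ne hab] using le_map_of_mem_KHexplicit hr hh hab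

lemma isBanded_mConj_of_mem_KHexplicit (hv : IsDVal v ϖ) (hh : h ∈ KHexplicit v ϖ n r) :
    IsBanded v r ((mMat F n)⁻¹ * dg1 h * mMat F n) := by
  intro i j
  induction i using Fin.lastCases with
  | last =>
    induction j using Fin.lastCases with
    | last => simp [mConj_last_last, hv.map_one]
    | cast b => simp [mConj_last_castSucc, hv.map_zero]
  | cast a =>
    induction j using Fin.lastCases with
    | last =>
      rw [mConj_castSucc_last]
      refine le_trans (WithTop.coe_le_coe.mpr (le_of_eq ?_)) (hh.2 a.rev)
      rw [Fin.val_castSucc, Fin.val_last, Fin.intCast_val_rev, abs_of_neg (by omega)]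
      ring
    | cast b =>
      rw [mConj_castSucc_castSucc]
      refine le_trans (WithTop.coe_le_coe.mpr (le_of_eq ?_)) (hh.1 a.rev b.rev)
      rw [Fin.val_castSucc, Fin.val_castSucc, Fin.intCast_val_rev, Fin.intCast_val_rev,
        abs_sub_comm]
      ring_nf

theorem mConj_mem_KparSq_of_mem_KHexplicit (hv : IsDVal v ϖ) (hr : 1 ≤ r)
    (hh : h ∈ KHexplicit v ϖ n r) :
    h ∈ GLO v n ∧ (∀ i j, 0 ≤ v ((tMat ϖ n (-r) * h * tMat ϖ n r) i j)) ∧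
      (mMat F n)⁻¹ * dg1 h * mMat F n ∈ KparSq v ϖ (n + 1) (-r) := by
  have hr0 : 0 ≤ r := by omega
  have hdet : v h.det = 0 := hv.toAddValuation.map_det_eq_zero (c := (r : WithTop ℤ))
    (by exact_mod_cast hr) (le_map_sub_one_of_mem_KHexplicit hv hr0 hh)
  have hB : IsBanded v r h := hh.1
  refine ⟨(hB.mem_Kpar hv hr0 hdet).1, hB.zero_le_conj hv hr0,
    (isBanded_mConj_of_mem_KHexplicit hv hh).mem_Kpar hv hr0 (by rwa [det_mConj]), fun i => ?_⟩
  induction i using Fin.lastCases with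
  | last => simp [mConj_last_last, hv.map_zero]
  | cast a =>
    rw [mConj_castSucc_castSucc, abs_neg, abs_of_nonneg hr0]
    simpa using le_map_sub_one_of_mem_KHexplicit hv hr0 hh a.rev a.rev

theorem mem_KHexplicit_of_mConj_mem_Kpar (hv : IsDVal v ϖ)
    (hconj : ∀ i j, 0 ≤ v ((tMat ϖ n (-r) * h * tMat ϖ n r) i j))
    (hK : (mMat F n)⁻¹ * dg1 h * mMat F n ∈ Kpar v ϖ (n + 1) (-r)) :
    h ∈ KHexplicit v ϖ n r := by
  have hG := hK.2.1
  rw [neg_neg] at hG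
  have hGbound := fun i j => (hv.zero_le_map_tMat_conj_apply_iff r _ i j).1 (hG i j)
  refine ⟨fun a b => ?_, fun a => ?_⟩
  · rcases le_total (a : ℕ) b with hab | hab
    · refine le_trans (WithTop.coe_le_coe.mpr (le_of_eq ?_))
        ((hv.zero_le_map_tMat_conj_apply_iff r h a b).1 (hconj a b))
      rw [abs_of_nonpos (by omega)]
      ring
    · have hlow := hGbound a.rev.castSucc b.rev.castSucc
      rw [mConj_castSucc_castSucc, Fin.rev_rev, Fin.rev_rev] at hlow
      refine le_trans (WithTop.coe_le_coe.mpr (le_of_eq ?_)) hlow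
      rw [Fin.val_castSucc, Fin.val_castSucc, Fin.intCast_val_rev, Fin.intCast_val_rev,
        abs_of_nonneg (by omega)]
      ring
  · have hlast := hGbound a.rev.castSucc (Fin.last n)
    rw [mConj_castSucc_last, Fin.rev_rev] at hlast
    refine le_trans (WithTop.coe_le_coe.mpr (le_of_eq ?_)) hlast
    rw [Fin.val_castSucc, Fin.val_last, Fin.intCast_val_rev]
    ring

end KH

theorem statement8_general {F : Type*} [Field F] (v : F → WithTop ℤ) (ϖ : F) (hval : IsDVal v ϖ)
    (n : ℕ) (r : ℤ) (hr : 1 ≤ r) :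
    (∀ h : Matrix (Fin n) (Fin n) F,
      ((h ∈ GLO v n ∧ (∀ i j, 0 ≤ v ((tMat ϖ n (-r) * h * tMat ϖ n r) i j)) ∧
          (mMat F n)⁻¹ * dg1 h * mMat F n ∈ Kpar v ϖ (n + 1) (-r)) ↔
        h ∈ KHexplicit v ϖ n r) ∧
      ((h ∈ GLO v n ∧ (∀ i j, 0 ≤ v ((tMat ϖ n (-r) * h * tMat ϖ n r) i j)) ∧
          (mMat F n)⁻¹ * dg1 h * mMat F n ∈ KparSq v ϖ (n + 1) (-r)) ↔
        h ∈ KHexplicit v ϖ n r)) ∧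
    KH v ϖ n r = KHexplicit v ϖ n r := by
  have iff_Kpar : ∀ h : Matrix (Fin n) (Fin n) F,
      (h ∈ GLO v n ∧ (∀ i j, 0 ≤ v ((tMat ϖ n (-r) * h * tMat ϖ n r) i j)) ∧
        (mMat F n)⁻¹ * dg1 h * mMat F n ∈ Kpar v ϖ (n + 1) (-r)) ↔ h ∈ KHexplicit v ϖ n r :=
    fun h => ⟨fun ⟨_, hconj, hK⟩ => mem_KHexplicit_of_mConj_mem_Kpar hval hconj hK,
      fun hh => have ⟨hGL, hconj, hK⟩ := mConj_mem_KparSq_of_mem_KHexplicit hval hr hh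
        ⟨hGL, hconj, hK.1⟩⟩
  exact ⟨fun h => ⟨iff_Kpar h,
    fun ⟨_, hconj, hK⟩ => mem_KHexplicit_of_mConj_mem_Kpar hval hconj hK.1,
    mConj_mem_KparSq_of_mem_KHexplicit hval hr⟩, Set.ext iff_Kpar⟩

/-- Remark 5.8: equivalent descriptions of `K_H^{(r)}`. -/
theorem statement8 {F : Type*} [Field F] (v : F → WithTop ℤ) (ϖ : F) (hval : IsDVal v ϖ)
    (n : ℕ) (hn : 1 ≤ n) (r : ℤ) (hr : 1 ≤ r) :
    (∀ h : Matrix (Fin n) (Fin n) F,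
      ((h ∈ GLO v n ∧ (∀ i j, 0 ≤ v ((tMat ϖ n (-r) * h * tMat ϖ n r) i j)) ∧
          (mMat F n)⁻¹ * dg1 h * mMat F n ∈ Kpar v ϖ (n + 1) (-r)) ↔
        h ∈ KHexplicit v ϖ n r) ∧
      ((h ∈ GLO v n ∧ (∀ i j, 0 ≤ v ((tMat ϖ n (-r) * h * tMat ϖ n r) i j)) ∧
          (mMat F n)⁻¹ * dg1 h * mMat F n ∈ KparSq v ϖ (n + 1) (-r)) ↔
        h ∈ KHexplicit v ϖ n r)) ∧
    KH v ϖ n r = KHexplicit v ϖ n r :=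
  statement8_general v ϖ hval n r hr
end
end

section
/- Let R be a commutative ring, n ≥ 1 an integer, and γ ∈ M_{n+1}(R) with block decomposition having upper-left n×n block A, upper-right n×1 column b, lower-left 1×n row c, and lower-right entry d. Let D ∈ M_{n+1}(R) be the matrix whose (k+1)-st row is e_{n+1}ᵀ·γ^{k} for k = 0, 1, …, n, and let N ∈ M_n(R) be the matrix whose (j+1)-st row is c·A^{j} for j = 0, 1, …, n−1. Then det D = (−1)^n · det N. -/
/-!
Let `e` be the last basis row vector. For a row `(x, s)` one has `(x, s) γ = (x A + s c, *)`, so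
`e γ^k` equals `(c A^(k-1), 0)` modulo the span of `e, (c, 0), …, (c A^(k-2), 0)`. Hence `D` is a
lower unitriangular matrix times the matrix with rows `e, (c, 0), (c A, 0), …, (c A^(n-1), 0)`,
whose determinant is `(-1)^n det N` by expansion along the last column.
-/

open Matrix

noncomputable section

namespace Matrix

variable {R : Type*} [CommRing R]

theorem det_of_eq_of_sub_mem_span_Iio {ι : Type*} [Fintype ι] [DecidableEq ι] [LinearOrder ι]
    (v w : ι → ι → R) (h : ∀ i, v i - w i ∈ Submodule.span R (w '' Set.Iio i)) :
    (of v).det = (of w).det := by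
  choose f hf_supp hf using fun i => (Finsupp.mem_span_image_iff_linearCombination R).1 (h i)
  let T : Matrix ι ι R := 1 + of fun i j => f i j
  have hT : T.IsLowerTriangular := fun i j (hij : i < j) => by
    have : f i j = 0 := Finsupp.notMem_support_iff.1 fun hj => (hf_supp i hj).not_gt hij
    simp [T, hij.ne, this]
  have hvTw : of v = T * of w := by
    ext i j
    have hrow := congrFun (hf i) j
    rw [Finsupp.linearCombination_apply, Finsupp.sum_fintype _ _ (by simp)] at hrow
    simp only [Finset.sum_apply, Pi.smul_apply, smul_eq_mul, Pi.sub_apply] at hrow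
    rw [Matrix.add_mul, Matrix.one_mul, Matrix.add_apply, Matrix.mul_apply]
    simp only [of_apply, hrow, add_sub_cancel]
  have hdetT : T.det = 1 := by
    rw [det_of_isLowerTriangular T hT]
    refine Finset.prod_eq_one fun i _ => ?_
    have : f i i = 0 := Finsupp.notMem_support_iff.1 fun hi => (hf_supp i hi).false
    simp [T, this]
  rw [hvTw, det_mul, hdetT, one_mul]

end Matrix

section Krylov

variable {R : Type*} [CommRing R] {n : ℕ}

theorem vecMul_apply_castSucc (v : Fin (n + 1) → R) (γ : Matrix (Fin (n + 1)) (Fin (n + 1)) R)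
    (p : Fin n) :
    (v ᵥ* γ) p.castSucc = (Fin.init v ᵥ* of fun a b : Fin n => γ a.castSucc b.castSucc) p
      + v (Fin.last n) * γ (Fin.last n) p.castSucc := by
  simp [vecMul, dotProduct, Fin.sum_univ_castSucc, Fin.init]

def krylovRow (c : Fin n → R) (A : Matrix (Fin n) (Fin n) R) : ℕ → Fin (n + 1) → R
  | 0 => Fin.snoc (α := fun _ => R) 0 1
  | k + 1 => Fin.snoc (α := fun _ => R) (c ᵥ* A ^ k) 0

@[simp] theorem krylovRow_last (c : Fin n → R) (A : Matrix (Fin n) (Fin n) R) (k : ℕ) :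
    krylovRow c A k (Fin.last n) = if k = 0 then 1 else 0 := by
  cases k <;> simp [krylovRow]

theorem krylovRow_vecMul (γ : Matrix (Fin (n + 1)) (Fin (n + 1)) R)
    (A : Matrix (Fin n) (Fin n) R) (hA : A = of fun a b => γ a.castSucc b.castSucc)
    (c : Fin n → R) (hc : c = fun b => γ (Fin.last n) b.castSucc) (k : ℕ) :
    krylovRow c A k ᵥ* γ
      = krylovRow c A (k + 1) + (krylovRow c A k ᵥ* γ) (Fin.last n) • krylovRow c A 0 := by
  subst hA hc
  ext j
  induction j using Fin.lastCases with
  | last => simp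
  | cast p =>
    rw [vecMul_apply_castSucc]
    cases k <;> simp [krylovRow, pow_succ, vecMul_vecMul]

theorem krylovRow_zero_vecMul_pow_sub_mem_span (γ : Matrix (Fin (n + 1)) (Fin (n + 1)) R)
    (A : Matrix (Fin n) (Fin n) R) (hA : A = of fun a b => γ a.castSucc b.castSucc)
    (c : Fin n → R) (hc : c = fun b => γ (Fin.last n) b.castSucc) (k : ℕ) :
    krylovRow c A 0 ᵥ* γ ^ k - krylovRow c A k
      ∈ Submodule.span R (krylovRow c A '' Set.Iio k) := by
  set V : ℕ → Submodule R (Fin (n + 1) → R) := fun k =>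
    Submodule.span R (krylovRow c A '' Set.Iio k)
  have hV_mono : Monotone V := fun i j hij =>
    Submodule.span_mono (Set.image_mono (Set.Iio_subset_Iio hij))
  have hV_mem {i k : ℕ} (hik : i < k) : krylovRow c A i ∈ V k :=
    Submodule.subset_span ⟨i, hik, rfl⟩
  have hstep (i : ℕ) : krylovRow c A i ᵥ* γ - krylovRow c A (i + 1) ∈ V 1 := by
    rw [krylovRow_vecMul γ A hA c hc, add_sub_cancel_left]
    exact Submodule.smul_mem _ _ (hV_mem zero_lt_one)
  have hV_vecMul (k : ℕ) : ∀ x ∈ V k, x ᵥ* γ ∈ V (k + 1) := by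
    suffices V k ≤ (V (k + 1)).comap (vecMulLinear γ) from fun x hx => this hx
    refine Submodule.span_le.2 ?_
    rintro _ ⟨i, hi : i < k, rfl⟩
    change krylovRow c A i ᵥ* γ ∈ V (k + 1)
    rw [← sub_add_cancel (krylovRow c A i ᵥ* γ) (krylovRow c A (i + 1))]
    exact add_mem (hV_mono (by omega) (hstep i)) (hV_mem (by omega))
  induction k with
  | zero => simp
  | succ k ih =>
    rw [pow_succ, ← vecMul_vecMul, ← sub_add_sub_cancel _ (krylovRow c A k ᵥ* γ),
      ← sub_vecMul]
    exact add_mem (hV_vecMul k _ ih) (hV_mono (by omega) (hstep k))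

theorem det_of_krylovRow (c : Fin n → R) (A : Matrix (Fin n) (Fin n) R) :
    (of fun i : Fin (n + 1) => krylovRow c A i).det
      = (-1) ^ n * (of fun i j : Fin n => (c ᵥ* A ^ (i : ℕ)) j).det := by
  have hminor : (of fun i : Fin (n + 1) => krylovRow c A i).submatrix Fin.succ Fin.castSucc
      = of fun i j : Fin n => (c ᵥ* A ^ (i : ℕ)) j := by
    ext i j
    simp [krylovRow]
  rw [det_succ_column _ (Fin.last n), Fin.sum_univ_succ]
  simp [hminor]

end Krylov

theorem statement13_general (R : Type*) [CommRing R] (n : ℕ)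
    (γ : Matrix (Fin (n + 1)) (Fin (n + 1)) R)
    (A : Matrix (Fin n) (Fin n) R)
    (hA : A = Matrix.of fun a b => γ (Fin.castSucc a) (Fin.castSucc b))
    (c : Fin n → R) (hc : c = fun b => γ (Fin.last n) (Fin.castSucc b))
    (e : Fin (n + 1) → R) (he : e = fun j => if j = Fin.last n then 1 else 0)
    (D : Matrix (Fin (n + 1)) (Fin (n + 1)) R)
    (hD : D = Matrix.of fun (k : Fin (n + 1)) (j : Fin (n + 1)) =>
      Matrix.vecMul e (γ ^ (k : ℕ)) j)
    (N : Matrix (Fin n) (Fin n) R)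
    (hN : N = Matrix.of fun (k : Fin n) (j : Fin n) => Matrix.vecMul c (A ^ (k : ℕ)) j) :
    D.det = (-1) ^ n * N.det := by
  have he_krylov : e = krylovRow c A 0 := by
    subst he
    ext j
    induction j using Fin.lastCases <;> simp [krylovRow, Fin.castSucc_ne_last]
  subst hD hN he_krylov
  have hspan (k : Fin (n + 1)) : krylovRow c A 0 ᵥ* γ ^ (k : ℕ) - krylovRow c A k
      ∈ Submodule.span R ((fun i : Fin (n + 1) => krylovRow c A i) '' Set.Iio k) := by
    refine Submodule.span_mono ?_ (krylovRow_zero_vecMul_pow_sub_mem_span γ A hA c hc k)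
    rintro _ ⟨i, hi : i < k, rfl⟩
    exact ⟨⟨i, by omega⟩, hi, rfl⟩
  exact (det_of_eq_of_sub_mem_span_Iio _ _ hspan).trans (det_of_krylovRow c A)

/-- The determinant identity `D⁺(γ) = det(e_{n+1}ᵀ, e_{n+1}ᵀγ, …, e_{n+1}ᵀγ^n)
= (-1)^n · det(c, cA, …, cA^{n-1})` for `γ = [[A, b], [c, d]]`. -/
theorem statement13 (R : Type*) [CommRing R] (n : ℕ) (hn : 1 ≤ n)
    (γ : Matrix (Fin (n + 1)) (Fin (n + 1)) R)
    (A : Matrix (Fin n) (Fin n) R)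
    (hA : A = Matrix.of fun a b => γ (Fin.castSucc a) (Fin.castSucc b))
    (c : Fin n → R) (hc : c = fun b => γ (Fin.last n) (Fin.castSucc b))
    (e : Fin (n + 1) → R) (he : e = fun j => if j = Fin.last n then 1 else 0)
    (D : Matrix (Fin (n + 1)) (Fin (n + 1)) R)
    (hD : D = Matrix.of fun (k : Fin (n + 1)) (j : Fin (n + 1)) =>
      Matrix.vecMul e (γ ^ (k : ℕ)) j)
    (N : Matrix (Fin n) (Fin n) R)
    (hN : N = Matrix.of fun (k : Fin n) (j : Fin n) => Matrix.vecMul c (A ^ (k : ℕ)) j) :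
    D.det = (-1) ^ n * N.det :=
  statement13_general R n γ A hA c hc e he D hD N hN
end
end

section
/- Let R be a commutative ring, n ≥ 1 an integer, A ∈ M_n(R), c a 1×n row vector over R, and u an n×1 column vector over R. Then for every natural number i, the R-submodule of the module of 1×n row vectors spanned by {c·(A + u·c)^{j} : 0 ≤ j < i} equals the R-submodule spanned by {c·A^{j} : 0 ≤ j < i}. -/
open Matrix

noncomputable section

lemma vecMul_vecMulVec' {R : Type*} [CommRing R] {n : ℕ} (x u c : Fin n → R) :
    Matrix.vecMul x (Matrix.vecMulVec u c) = (x ⬝ᵥ u) • c := by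
  funext j
  simp [Matrix.vecMul, Matrix.vecMulVec, dotProduct, Finset.sum_mul, mul_assoc]

lemma aux14 {R : Type*} [CommRing R] {n : ℕ} (A : Matrix (Fin n) (Fin n) R)
    (c u : Fin n → R) (j : ℕ) :
    Matrix.vecMul c ((A + Matrix.vecMulVec u c) ^ j) ∈
      Submodule.span R ((fun k : ℕ => Matrix.vecMul c (A ^ k)) '' Set.Iic j) := by
  induction j with
  | zero =>
    exact Submodule.subset_span ⟨0, le_refl 0, by simp⟩
  | succ j ih =>
    set B := A + Matrix.vecMulVec u c with hBdef
    set v := Matrix.vecMul c (B ^ j) with hv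
    have hstep : Matrix.vecMul c (B ^ (j + 1)) =
        Matrix.vecMul v A + (v ⬝ᵥ u) • c := by
      rw [pow_succ, ← Matrix.vecMul_vecMul, ← hv, hBdef, Matrix.vecMul_add,
        vecMul_vecMulVec']
    rw [hstep]
    have hc : c ∈ Submodule.span R ((fun k : ℕ => Matrix.vecMul c (A ^ k)) '' Set.Iic (j+1)) :=
      Submodule.subset_span ⟨0, by simp, by simp⟩
    have hvA : Matrix.vecMul v A ∈
        Submodule.span R ((fun k : ℕ => Matrix.vecMul c (A ^ k)) '' Set.Iic (j+1)) := by
      have h1 : A.vecMulLinear v ∈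
          Submodule.map A.vecMulLinear
            (Submodule.span R ((fun k : ℕ => Matrix.vecMul c (A ^ k)) '' Set.Iic j)) :=
        Submodule.mem_map_of_mem ih
      rw [Submodule.map_span] at h1
      refine Submodule.span_le.2 ?_ h1
      rintro _ ⟨_, ⟨k, hk, rfl⟩, rfl⟩
      apply Submodule.subset_span
      refine ⟨k + 1, by simpa using Nat.succ_le_succ hk, ?_⟩
      simp [pow_succ, Matrix.vecMul_vecMul]
    exact Submodule.add_mem _ hvA (Submodule.smul_mem _ _ hc)

/-- Span invariance: the span of `c·(A + u·c)^j` for `j < i` equals the span of `c·A^j`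
for `j < i`. -/
theorem statement14 (R : Type*) [CommRing R] (n : ℕ) (hn : 1 ≤ n)
    (A : Matrix (Fin n) (Fin n) R) (c u : Fin n → R) (i : ℕ) :
    Submodule.span R
        ((fun j : ℕ => Matrix.vecMul c ((A + Matrix.vecMulVec u c) ^ j)) '' Set.Iio i) =
      Submodule.span R ((fun j : ℕ => Matrix.vecMul c (A ^ j)) '' Set.Iio i) := by
  have key : ∀ (A' : Matrix (Fin n) (Fin n) R) (u' : Fin n → R),
      Submodule.span R
          ((fun j : ℕ => Matrix.vecMul c ((A' + Matrix.vecMulVec u' c) ^ j)) '' Set.Iio i) ≤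
        Submodule.span R ((fun j : ℕ => Matrix.vecMul c (A' ^ j)) '' Set.Iio i) := by
    intro A' u'
    rw [Submodule.span_le]
    rintro _ ⟨j, hj, rfl⟩
    refine Submodule.span_mono ?_ (aux14 A' c u' j)
    rintro _ ⟨k, hk, rfl⟩
    exact ⟨k, Set.mem_Iio.2 (lt_of_le_of_lt (Set.mem_Iic.1 hk) (Set.mem_Iio.1 hj)), rfl⟩
  have hA : A = (A + Matrix.vecMulVec u c) + Matrix.vecMulVec (-u) c := by
    funext a b
    simp [Matrix.vecMulVec_apply]
  refine le_antisymm (key A u) ?_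
  conv_lhs => rw [hA]
  exact key (A + Matrix.vecMulVec u c) (-u)
end
end

section
/- Let E be a field and σ : E → E a ring automorphism with σ ∘ σ = id. Let n ≥ 1 be an integer and write n = 2m + ε with ε ∈ {0, 1}. Let γ ∈ GL_{n+1}(E) and set s := γ·σ(γ)^{−1} ∈ GL_{n+1}(E), where σ(γ) denotes the matrix obtained by applying σ to each entry of γ. Let R ∈ M_{n+1}(E) be the matrix whose (k+1)-st row is e_{n+1}ᵀ·s^{k} for k = 0, 1, …, n, and set a := det(R)·(det s)^{−(m+ε)}·(det γ)^{ε} ∈ E. Then σ(a) = (−1)^{n(n+1)/2}·a. -/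
open Matrix

noncomputable section

open Equiv in
lemma sign_revPerm_aux (N : ℕ) :
    Equiv.Perm.sign (Fin.revPerm : Equiv.Perm (Fin N)) = (-1) ^ (N * (N - 1) / 2) := by
  induction N with
  | zero => decide
  | succ N ih =>
    have key : (Fin.revPerm : Equiv.Perm (Fin (N + 1))) =
        Equiv.Perm.decomposeFin.symm (0, (Fin.revPerm : Equiv.Perm (Fin N))) *
          finRotate (N + 1) := by
      ext j
      refine Fin.lastCases ?_ (fun i => ?_) j
      · simp [Equiv.Perm.mul_apply, finRotate_last]
      · simp only [Equiv.Perm.mul_apply, finRotate_succ_apply, Fin.coeSucc_eq_succ,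
          Equiv.Perm.decomposeFin_symm_apply_succ, Fin.revPerm_apply, Fin.rev_castSucc,
          Equiv.swap_self, Equiv.refl_apply]
    rw [key, _root_.map_mul, Equiv.Perm.decomposeFin.symm_sign, sign_finRotate, ih]
    rw [if_pos rfl, one_mul, ← pow_add]
    congr 1
    obtain ⟨k, hk⟩ := Nat.even_mul_succ_self (N - 1)
    have h1 : N * (N - 1) = (N - 1) * (N - 1 + 1) := by
      cases N <;> simp [Nat.mul_comm]
    have h2 : (N + 1) * N = N * (N - 1) + 2 * N := by
      cases N with
      | zero => rfl
      | succ K => simp only [Nat.add_sub_cancel]; ring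
    rw [Nat.add_sub_cancel, h2, h1, hk]
    omega

lemma mapMatrix_nonsing_inv {E : Type*} [Field E] (σ : E →+* E) {k : ℕ}
    (M : Matrix (Fin k) (Fin k) E) : (M⁻¹).map σ = (M.map σ)⁻¹ := by
  have hadj : (M.adjugate).map σ = (M.map σ).adjugate := by
    simpa [RingHom.mapMatrix_apply] using RingHom.map_adjugate σ M
  have hdet : σ M.det = (M.map σ).det := by
    simpa [RingHom.mapMatrix_apply] using RingHom.map_det σ M
  rw [Matrix.inv_def, Matrix.inv_def, Ring.inverse_eq_inv, Ring.inverse_eq_inv]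
  ext i j
  simp only [Matrix.map_apply, Matrix.smul_apply, smul_eq_mul, _root_.map_mul, map_inv₀, hdet]
  congr 1
  rw [← hadj, Matrix.map_apply]


/-- Lemma 3.5 (rationality of the transfer factor): for `s = γ·σ(γ)⁻¹` and
`a = det(e, es, …, es^n) · (det s)^{-(m+ε)} · (det γ)^ε`, one has
`σ(a) = (-1)^{n(n+1)/2}·a`. -/
theorem statement16 (E : Type*) [Field E] (σ : E →+* E) (hσ : ∀ x, σ (σ x) = x)
    (n : ℕ) (hn : 1 ≤ n) (m ε : ℕ) (hε : ε = 0 ∨ ε = 1) (hnm : n = 2 * m + ε)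
    (γ : Matrix (Fin (n + 1)) (Fin (n + 1)) E) (hγ : IsUnit γ)
    (s : Matrix (Fin (n + 1)) (Fin (n + 1)) E) (hs : s = γ * (γ.map σ)⁻¹)
    (e : Fin (n + 1) → E) (he : e = fun j => if j = Fin.last n then 1 else 0)
    (Rm : Matrix (Fin (n + 1)) (Fin (n + 1)) E)
    (hR : Rm = Matrix.of fun (k : Fin (n + 1)) (j : Fin (n + 1)) =>
      Matrix.vecMul e (s ^ (k : ℕ)) j)
    (a : E) (ha : a = Rm.det * s.det ^ (-((m : ℤ) + (ε : ℤ))) * γ.det ^ ε) :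
    σ a = (-1) ^ (n * (n + 1) / 2) * a := by
  classical
  have hmapdet : ∀ M : Matrix (Fin (n+1)) (Fin (n+1)) E, σ M.det = (M.map σ).det := fun M => by
    simpa [RingHom.mapMatrix_apply] using RingHom.map_det σ M
  have hdγ : γ.det ≠ 0 := ((Matrix.isUnit_iff_isUnit_det γ).mp hγ).ne_zero
  have hdB : (γ.map σ).det ≠ 0 := by
    rw [← hmapdet]
    exact fun h => hdγ (by simpa using σ.injective (h.trans (map_zero σ).symm))
  have hγγ : (γ.map σ).map σ = γ := by ext i j; simp [hσ]
  have hsinv : s⁻¹ = (γ.map σ) * γ⁻¹ := by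
    rw [hs, Matrix.mul_inv_rev, Matrix.nonsing_inv_nonsing_inv _ hdB.isUnit]
  have hsmap : s.map σ = s⁻¹ := by
    rw [hsinv, hs, Matrix.map_mul, mapMatrix_nonsing_inv, hγγ]
  have hds : s.det ≠ 0 := by
    rw [hs, Matrix.det_mul, Matrix.det_nonsing_inv, Ring.inverse_eq_inv]
    exact mul_ne_zero hdγ (inv_ne_zero hdB)
  have hσds : σ s.det = s.det⁻¹ := by
    rw [hmapdet, hsmap, Matrix.det_nonsing_inv, Ring.inverse_eq_inv]
  have hσdγ : σ γ.det = γ.det * s.det⁻¹ := by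
    have h1 : s.det = γ.det * (σ γ.det)⁻¹ := by
      rw [hs, Matrix.det_mul, Matrix.det_nonsing_inv, Ring.inverse_eq_inv, hmapdet]
    have hσγ : σ γ.det ≠ 0 := by rw [hmapdet]; exact hdB
    field_simp at h1 ⊢
    linear_combination h1
  -- rows of Rm
  have he' : e = Pi.single (Fin.last n) 1 := by
    rw [he]; ext j; simp [Pi.single_apply]
  have hRm : ∀ (k j : Fin (n+1)), Rm k j = (s ^ (k : ℕ)) (Fin.last n) j := by
    intro k j
    rw [hR, he']
    simp [Matrix.single_one_vecMul]
  have hsu : ∀ k : ℕ, IsUnit ((s ^ k).det) := fun k => by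
    rw [Matrix.det_pow]; exact (pow_ne_zero k hds).isUnit
  have hspow : ∀ k : ℕ, (s ^ k).map σ = (s ^ k)⁻¹ := by
    intro k
    have : (s ^ k).map σ = (s.map σ) ^ k := by
      simpa [RingHom.mapMatrix_apply] using map_pow σ.mapMatrix s k
    rw [this, hsmap, Matrix.inv_pow']
  -- key: (s^k)⁻¹ = s^(rev k) * (s^n)⁻¹
  have key : ∀ k : Fin (n+1), (s ^ (k : ℕ))⁻¹ = s ^ ((Fin.rev k : ℕ)) * (s ^ n)⁻¹ := by
    intro k
    refine Matrix.inv_eq_right_inv ?_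
    rw [← Matrix.mul_assoc, ← pow_add]
    have hrk : (k : ℕ) + (Fin.rev k : ℕ) = n := by
      have h1 : (Fin.rev k : ℕ) = n + 1 - (k + 1) := Fin.val_rev k
      have h2 : (k : ℕ) ≤ n := Fin.is_le k
      omega
    rw [hrk]
    exact Matrix.mul_nonsing_inv _ (hsu n)
  have hmapRm : Rm.map σ = (Rm.submatrix Fin.revPerm id) * (s ^ n)⁻¹ := by
    ext k j
    rw [Matrix.map_apply, hRm k j]
    show ((s ^ (k : ℕ)).map σ) (Fin.last n) j = _
    rw [hspow, key k, Matrix.mul_apply]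
    simp only [Matrix.mul_apply, Matrix.submatrix_apply, id_eq, Fin.revPerm_apply]
    refine Finset.sum_congr rfl fun l _ => ?_
    rw [hRm]
  have hσRm : σ Rm.det = (-1 : E) ^ (n * (n + 1) / 2) * Rm.det * (s.det ^ n)⁻¹ := by
    rw [hmapdet, hmapRm, Matrix.det_mul, Matrix.det_nonsing_inv, Ring.inverse_eq_inv,
      Matrix.det_pow]
    have hperm : (Rm.submatrix Fin.revPerm id).det
        = ((Equiv.Perm.sign (Fin.revPerm : Equiv.Perm (Fin (n+1))) : ℤ) : E) * Rm.det := by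
      rw [← Matrix.det_permute]
    rw [hperm, sign_revPerm_aux]
    have hee : (n + 1) * (n + 1 - 1) / 2 = n * (n + 1) / 2 := by
      rw [Nat.add_sub_cancel, Nat.mul_comm]
    rw [hee]
    push_cast
    ring
  -- final algebra
  have hd : s.det ≠ 0 := hds
  have hzpow : s.det ^ (-((m : ℤ) + (ε : ℤ))) = (s.det ^ (m + ε))⁻¹ := by
    rw [← zpow_natCast s.det (m + ε), ← _root_.zpow_neg]
    norm_cast
  have hσzpow : (σ s.det) ^ (-((m : ℤ) + (ε : ℤ))) = s.det ^ (m + ε) := by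
    rw [hσds, _root_.inv_zpow', ← zpow_natCast s.det (m + ε)]
    congr 1
    push_cast
    ring
  rw [ha, _root_.map_mul, _root_.map_mul, map_zpow₀, map_pow, hσRm, hσzpow, hσdγ, hzpow]
  have hdn : s.det ^ n = s.det ^ (m + ε) * s.det ^ m := by
    rw [← pow_add]; congr 1; omega
  rcases hε with h | h <;> subst h <;>
    · rw [hdn]
      field_simp
      ring
end
end
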